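/- Let G be a finite simple graph, let k ≥ 4 be an integer, let β be an eigenvalue of the adjacency matrix of some subgraph of G, and let λ be a complex number with λ^k = β². Then λ is an eigenvalue of the k-power hypergraph G^(k). -/

import Mathlib

open Finset

/-- `(lam, x)` is an eigenpair of the `k`-uniform hypergraph with hyperedge set `E`:
`x` is nonzero and for every vertex `i`,
`lam * x i ^ (k-1) = ∑_{e ∈ E, i ∈ e} ∏_{v ∈ e \ {i}} x v`. -/
def IsHypergraphEigenpair {W : Type*} [Fintype W] [DecidableEq W]
    (k : ℕ) (E : Finset (Finset W)) (lam : ℂ) (x : W → ℂ) : Prop :=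
  x ≠ 0 ∧ ∀ i : W, lam * x i ^ (k - 1) =
    ∑ e ∈ E.filter (fun e => i ∈ e), ∏ v ∈ e.erase i, x v

/-- `lam` is an eigenvalue of the `k`-uniform hypergraph with hyperedge set `E`. -/
def IsHypergraphEigenvalue {W : Type*} [Fintype W] [DecidableEq W]
    (k : ℕ) (E : Finset (Finset W)) (lam : ℂ) : Prop :=
  ∃ x, IsHypergraphEigenpair k E lam x

/-- The hyperedge of the `k`-power hypergraph `G^(k)` corresponding to the edge `e` of `G`:
it consists of the two endpoints of `e` together with the `k - 2` added vertices on `e`. -/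
def powerEdge {V : Type*} [Fintype V] [DecidableEq V] (G : SimpleGraph V) [DecidableRel G.Adj]
    (k : ℕ) (e : G.edgeSet) : Finset (V ⊕ (G.edgeSet × Fin (k - 2))) :=
  Finset.univ.filter (fun v =>
    (∃ i, v = Sum.inl i ∧ i ∈ (e : Sym2 V)) ∨ ∃ t, v = Sum.inr (e, t))

/-- The hyperedge set of the `k`-power hypergraph `G^(k)`, whose vertices are the vertices of `G`
(`Sum.inl`) together with `k - 2` new vertices for each edge of `G` (`Sum.inr`). -/
def powerEdges {V : Type*} [Fintype V] [DecidableEq V] (G : SimpleGraph V) [DecidableRel G.Adj]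
    (k : ℕ) : Finset (Finset (V ⊕ (G.edgeSet × Fin (k - 2)))) :=
  Finset.univ.image (powerEdge G k)

/-!
Extend the eigenvector `y` of the subgraph with edge set `E'` by zero to `Y : V → ℂ`. Give each
vertex `u` a `k`-th root `c u` of `Y u ^ 2`, and the `k - 2` new vertices of an edge `e = uv` a
`k`-th root `z e` of `Y u * Y v / β` (of `0` if `e ∉ E'`), one of them multiplied by
`ω e = lam * z e ^ 2 / (c u * c v)`, which is a `k`-th root of unity because `lam ^ k = β ^ 2`.
The hyperedge of `e` then has product `lam * z e ^ k`, so the eigen-equation at `u` reduces to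
`Σ_{uv ∈ E'} Y v = β * Y u`, and the one at a new vertex to `ω e ^ k = 1`. A vertex of value `0`
satisfies its equation because every hyperedge through it has a second vertex of value `0`; for
the new vertices this needs `k - 2 ≥ 2`.
-/

theorem Sym2.mul_map_pow {α M : Type*} [CommMonoid M] (f : α → M) (n : ℕ) (e : Sym2 α) :
    (e.map f).mul ^ n = (e.map (f · ^ n)).mul := by
  induction e using Sym2.ind with
  | h a b => exact mul_pow (f a) (f b) n

theorem eq_zero_iff_of_pow_eq_pow {M : Type*} [MonoidWithZero M] [NoZeroDivisors M] {a b : M}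
    {m n : ℕ} (hm : m ≠ 0) (hn : n ≠ 0) (h : a ^ m = b ^ n) : a = 0 ↔ b = 0 := by
  rw [← pow_eq_zero_iff hm, h, pow_eq_zero_iff hn]

theorem Fin.prod_ite_val_eq_zero_mul {M : Type*} [CommMonoid M] {n : ℕ} (hn : n ≠ 0) (a b : M) :
    ∏ t : Fin n, (if (t : ℕ) = 0 then a * b else b) = a * b ^ n := by
  obtain ⟨m, rfl⟩ := Nat.exists_eq_succ_of_ne_zero hn
  simp [Fin.prod_univ_succ, pow_succ', mul_assoc]

section Eigenequation

variable {W : Type*} [DecidableEq W] {k : ℕ} {E : Finset (Finset W)} {lam : ℂ} {x : W → ℂ}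

theorem eigenequation_of_mul_pow_eq {i : W} (hk : k ≠ 0) (hi : x i ≠ 0)
    (h : lam * x i ^ k = ∑ e ∈ E.filter (i ∈ ·), ∏ v ∈ e, x v) :
    lam * x i ^ (k - 1) = ∑ e ∈ E.filter (i ∈ ·), ∏ v ∈ e.erase i, x v := by
  refine mul_left_cancel₀ hi ?_
  rw [mul_sum, ← mul_assoc, mul_comm (x i), mul_assoc, ← pow_succ', Nat.sub_add_cancel
    (Nat.one_le_iff_ne_zero.mpr hk), h]
  exact sum_congr rfl fun e he => (mul_prod_erase e x (mem_filter.mp he).2).symm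

theorem eigenequation_of_eq_zero {i : W} (hk : 1 < k) (hi : x i = 0)
    (h : ∀ e ∈ E, i ∈ e → ∃ j ∈ e, j ≠ i ∧ x j = 0) :
    lam * x i ^ (k - 1) = ∑ e ∈ E.filter (i ∈ ·), ∏ v ∈ e.erase i, x v := by
  rw [hi, zero_pow (by omega), mul_zero, eq_comm]
  refine sum_eq_zero fun e he => ?_
  obtain ⟨j, hje, hji, hj⟩ := h e (mem_filter.mp he).1 (mem_filter.mp he).2
  exact prod_eq_zero (mem_erase.mpr ⟨hji, hje⟩) hj

end Eigenequation

section PowerHypergraph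

variable {V : Type*} [Fintype V] [DecidableEq V] {G : SimpleGraph V} [DecidableRel G.Adj] {k : ℕ}

@[simp]
theorem inl_mem_powerEdge {a : V} {e : G.edgeSet} :
    (Sum.inl a : V ⊕ (G.edgeSet × Fin (k - 2))) ∈ powerEdge G k e ↔ a ∈ (e : Sym2 V) := by
  simp [powerEdge]

@[simp]
theorem inr_mem_powerEdge {f e : G.edgeSet} {t : Fin (k - 2)} :
    (Sum.inr (f, t) : V ⊕ (G.edgeSet × Fin (k - 2))) ∈ powerEdge G k e ↔ f = e := by
  simp [powerEdge, Prod.ext_iff]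

theorem powerEdge_injective (hk : 3 ≤ k) : Function.Injective (powerEdge G k) := by
  intro e f h
  have h0 : (Sum.inr (e, ⟨0, by omega⟩) : V ⊕ (G.edgeSet × Fin (k - 2))) ∈ powerEdge G k f := by
    rw [← h, inr_mem_powerEdge]
  exact inr_mem_powerEdge.mp h0

theorem sum_filter_powerEdges {M : Type*} [AddCommMonoid M] (hk : 3 ≤ k)
    (i : V ⊕ (G.edgeSet × Fin (k - 2))) (f : Finset (V ⊕ (G.edgeSet × Fin (k - 2))) → M) :
    ∑ h ∈ (powerEdges G k).filter (i ∈ ·), f h =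
      ∑ e ∈ univ.filter (i ∈ powerEdge G k ·), f (powerEdge G k e) := by
  rw [powerEdges, filter_image, sum_image fun e _ f _ h => powerEdge_injective hk h]

theorem prod_powerEdge {M : Type*} [CommMonoid M] (x : V ⊕ (G.edgeSet × Fin (k - 2)) → M)
    (e : G.edgeSet) :
    ∏ h ∈ powerEdge G k e, x h =
      ((e : Sym2 V).map (x ∘ Sum.inl)).mul * ∏ t, x (Sum.inr (e, t)) := by
  obtain ⟨e, he⟩ := e
  induction e using Sym2.ind with
  | h u v =>
    rw [← univ_inter (powerEdge G k _), ← prod_ite_mem, Fintype.prod_sum_type,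
      Fintype.prod_prod_type]
    simp only [inl_mem_powerEdge, inr_mem_powerEdge, ← Sym2.mem_toFinset, prod_ite_mem,
      univ_inter, Sym2.toFinset_mk_eq, prod_pair (G.ne_of_adj he), prod_ite_irrel, prod_const_one,
      Fintype.prod_ite_eq', Sym2.map_mk, Sym2.mul_mk, Function.comp_apply]

end PowerHypergraph

section IncidentEdges

variable {V : Type*} [Fintype V] [DecidableEq V] {M : Type*} [AddCommMonoid M]

theorem sum_filter_mem_eq_sum_filter_mk_mem (E' : Finset (Sym2 V)) (u : V) (f : Sym2 V → M) :
    ∑ e ∈ E'.filter (u ∈ ·), f e = ∑ v ∈ univ.filter (fun v => s(u, v) ∈ E'), f s(u, v) := by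
  have hinj : Set.InjOn (fun v => s(u, v)) (univ.filter (s(u, ·) ∈ E')) :=
    fun _ _ _ _ h => Sym2.congr_right.mp h
  rw [← sum_image hinj]
  congr 1
  ext e
  induction e using Sym2.ind with
  | h a b =>
    simp only [mem_filter, mem_image, mem_univ, true_and, Sym2.mem_iff]
    constructor
    · rintro ⟨he, rfl | rfl⟩
      exacts [⟨b, he, rfl⟩, ⟨a, Sym2.eq_swap ▸ he, Sym2.eq_swap⟩]
    · rintro ⟨v, hv, he⟩
      exact ⟨he ▸ hv, Sym2.mem_iff.mp (he ▸ Sym2.mem_mk_left u v)⟩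

theorem sum_edgeSet_filter_mem_eq_sum_filter_mk_mem {G : SimpleGraph V} [DecidableRel G.Adj]
    {E' : Finset (Sym2 V)} (hE' : E' ⊆ G.edgeFinset) (u : V) (f : Sym2 V → M)
    (hf : ∀ e ∉ E', f e = 0) :
    ∑ e ∈ univ.filter (fun e : G.edgeSet => u ∈ (e : Sym2 V)), f e =
      ∑ v ∈ univ.filter (fun v => s(u, v) ∈ E'), f s(u, v) := by
  rw [← sum_filter_mem_eq_sum_filter_mk_mem, sum_filter, sum_filter]
  calc _ = ∑ e ∈ G.edgeFinset, if u ∈ e then f e else 0 :=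
        (sum_subtype G.edgeFinset (fun _ => SimpleGraph.mem_edgeFinset) _).symm
    _ = _ := (sum_subset hE' fun e _ he => by simp [hf e he]).symm

end IncidentEdges

theorem exists_extend_eigenvector {V : Type*} [Fintype V] [DecidableEq V] {β : ℂ}
    {E' : Finset (Sym2 V)} {S : Finset V} (hE'S : ∀ e ∈ E', ∀ v ∈ e, v ∈ S) {y : S → ℂ}
    (hy : y ≠ 0)
    (heig : Matrix.mulVec
      (Matrix.of fun i j : S => if s((i : V), (j : V)) ∈ E' then (1 : ℂ) else 0) y = β • y) :
    ∃ Y : V → ℂ, Y ≠ 0 ∧ ∀ u, ∑ v ∈ univ.filter (fun v => s(u, v) ∈ E'), Y v = β * Y u := by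
  set Y : V → ℂ := fun u => if h : u ∈ S then y ⟨u, h⟩ else 0
  refine ⟨Y, ?_, fun u => ?_⟩
  · obtain ⟨j, hj⟩ := Function.ne_iff.mp hy
    exact Function.ne_iff.mpr ⟨j, by simpa [Y] using hj⟩
  have hsum : ∑ v ∈ univ.filter (fun v => s(u, v) ∈ E'), Y v =
      ∑ j : S, if s(u, (j : V)) ∈ E' then y j else 0 := by
    rw [sum_filter, ← sum_subset (subset_univ S) fun v _ hv => by simp [Y, hv], ← sum_coe_sort]
    simp [Y]
  rw [hsum]
  by_cases hu : u ∈ S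
  · simpa [Matrix.mulVec, dotProduct, Y, hu] using congrFun heig ⟨u, hu⟩
  · have hnot : ∀ v, s(u, v) ∉ E' := fun v he => hu (hE'S _ he u (Sym2.mem_mk_left u v))
    simp [Y, hu, hnot]

noncomputable section Construction

variable {V : Type*} {G : SimpleGraph V} {k : ℕ} {lam β : ℂ} {c : V → ℂ} {z : Sym2 V → ℂ}

def edgeTwist (lam : ℂ) (c : V → ℂ) (z : Sym2 V → ℂ) (e : Sym2 V) : ℂ :=
  lam * z e ^ 2 / (e.map c).mul

variable (G k) in
def powerVector (lam : ℂ) (c : V → ℂ) (z : Sym2 V → ℂ) : V ⊕ (G.edgeSet × Fin (k - 2)) → ℂ :=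
  Sum.elim c fun p => if (p.2 : ℕ) = 0 then edgeTwist lam c z p.1 * z p.1 else z p.1

@[simp]
theorem powerVector_inl (u : V) : powerVector G k lam c z (Sum.inl u) = c u := rfl

variable [DecidableEq V] {E' : Finset (Sym2 V)} {Y : V → ℂ}

def edgeWeight (E' : Finset (Sym2 V)) (β : ℂ) (Y : V → ℂ) (e : Sym2 V) : ℂ :=
  if e ∈ E' then (e.map Y).mul / β else 0

theorem edgeWeight_eq_zero_of_mem {u : V} {e : Sym2 V} (hu : Y u = 0) (he : u ∈ e) :
    edgeWeight E' β Y e = 0 := by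
  induction e using Sym2.ind with
  | h a b =>
    rcases Sym2.mem_iff.mp he with rfl | rfl <;> simp [edgeWeight, hu]

theorem edgeTwist_pow_eq_one (hlam : lam ^ k = β ^ 2) (hc : ∀ u, c u ^ k = Y u ^ 2)
    (hz : ∀ e, z e ^ k = edgeWeight E' β Y e) {e : Sym2 V} (hze : z e ≠ 0) :
    edgeTwist lam c z e ^ k = 1 := by
  have hq := hz e ▸ pow_ne_zero k hze
  rw [edgeWeight, ite_ne_right_iff, div_ne_zero_iff] at hq
  obtain ⟨he, hY, hβ⟩ := hq
  rw [edgeTwist, div_pow, mul_pow, ← pow_mul, mul_comm 2 k, pow_mul, hlam, hz e, edgeWeight,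
    if_pos he, Sym2.mul_map_pow, funext hc, ← Sym2.mul_map_pow]
  field_simp

theorem powerVector_inr_pow (hk : k ≠ 0) (hlam : lam ^ k = β ^ 2) (hc : ∀ u, c u ^ k = Y u ^ 2)
    (hz : ∀ e, z e ^ k = edgeWeight E' β Y e) (e : G.edgeSet) (t : Fin (k - 2)) :
    powerVector G k lam c z (Sum.inr (e, t)) ^ k = z e ^ k := by
  by_cases hze : z e = 0
  · simp [powerVector, hze, zero_pow hk]
  · simp [powerVector, mul_pow, edgeTwist_pow_eq_one hlam hc hz hze]

variable [Fintype V] [DecidableRel G.Adj]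

theorem prod_powerEdge_powerVector (hk : 3 ≤ k) (hc : ∀ u, c u ^ k = Y u ^ 2)
    (hz : ∀ e, z e ^ k = edgeWeight E' β Y e) (e : G.edgeSet) :
    ∏ h ∈ powerEdge G k e, powerVector G k lam c z h = lam * edgeWeight E' β Y e := by
  rw [prod_powerEdge]
  simp only [powerVector, Sum.elim_comp_inl, Sum.elim_inr]
  rw [Fin.prod_ite_val_eq_zero_mul (by omega)]
  by_cases hce : ((e : Sym2 V).map c).mul = 0
  · have hYe : ((e : Sym2 V).map Y).mul = 0 := by
      refine (eq_zero_iff_of_pow_eq_pow (m := k) (by omega) two_ne_zero ?_).mp hce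
      rw [Sym2.mul_map_pow, funext hc, ← Sym2.mul_map_pow]
    simp [hce, edgeWeight, hYe]
  · rw [edgeTwist, ← hz]
    field_simp
    rw [mul_assoc, ← pow_add, Nat.add_sub_cancel' (by omega : 2 ≤ k)]

theorem sum_edgeWeight (hE' : E' ⊆ G.edgeFinset)
    (hY : ∀ u, ∑ v ∈ univ.filter (fun v => s(u, v) ∈ E'), Y v = β * Y u) (hβ : β ≠ 0) (u : V) :
    ∑ e ∈ univ.filter (fun e : G.edgeSet => u ∈ (e : Sym2 V)), edgeWeight E' β Y e = Y u ^ 2 := by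
  rw [sum_edgeSet_filter_mem_eq_sum_filter_mk_mem hE' u (edgeWeight E' β Y) fun e he => if_neg he]
  calc _ = ∑ v ∈ univ.filter (fun v => s(u, v) ∈ E'), Y u * Y v / β :=
        sum_congr rfl fun v hv => if_pos (mem_filter.mp hv).2
    _ = Y u ^ 2 := by
      rw [← sum_div, ← mul_sum, hY]
      field_simp

theorem eigenequation_powerVector_inl (hk : 3 ≤ k) (hlam : lam ^ k = β ^ 2)
    (hc : ∀ u, c u ^ k = Y u ^ 2) (hz : ∀ e, z e ^ k = edgeWeight E' β Y e)
    (hE' : E' ⊆ G.edgeFinset)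
    (hY : ∀ u, ∑ v ∈ univ.filter (fun v => s(u, v) ∈ E'), Y v = β * Y u) (u : V) :
    lam * powerVector G k lam c z (Sum.inl u) ^ (k - 1) =
      ∑ h ∈ (powerEdges G k).filter (Sum.inl u ∈ ·),
        ∏ v ∈ h.erase (Sum.inl u), powerVector G k lam c z v := by
  by_cases hcu : c u = 0
  · have hYu : Y u = 0 := (eq_zero_iff_of_pow_eq_pow (by omega) two_ne_zero (hc u)).mp hcu
    refine eigenequation_of_eq_zero (by omega) hcu fun h hh hu => ?_
    obtain ⟨e, -, rfl⟩ := mem_image.mp hh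
    have hze : z e = 0 := (pow_eq_zero_iff (by omega)).mp
      ((hz e).trans (edgeWeight_eq_zero_of_mem hYu (inl_mem_powerEdge.mp hu)))
    exact ⟨Sum.inr (e, ⟨0, by omega⟩), inr_mem_powerEdge.mpr rfl, Sum.inr_ne_inl,
      by simp [powerVector, hze]⟩
  refine eigenequation_of_mul_pow_eq (by omega) hcu ?_
  simp only [sum_filter_powerEdges hk, inl_mem_powerEdge, prod_powerEdge_powerVector hk hc hz,
    ← mul_sum, powerVector_inl]
  rcases eq_or_ne β 0 with rfl | hβ
  · have hlam0 : lam = 0 := (eq_zero_iff_of_pow_eq_pow (by omega) two_ne_zero hlam).mpr rfl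
    simp [hlam0]
  · rw [sum_edgeWeight hE' hY hβ, hc]

theorem eigenequation_powerVector_inr (hk : 4 ≤ k) (hlam : lam ^ k = β ^ 2)
    (hc : ∀ u, c u ^ k = Y u ^ 2) (hz : ∀ e, z e ^ k = edgeWeight E' β Y e)
    (e : G.edgeSet) (t : Fin (k - 2)) :
    lam * powerVector G k lam c z (Sum.inr (e, t)) ^ (k - 1) =
      ∑ h ∈ (powerEdges G k).filter (Sum.inr (e, t) ∈ ·),
        ∏ v ∈ h.erase (Sum.inr (e, t)), powerVector G k lam c z v := by
  have hpow := powerVector_inr_pow (by omega) hlam hc hz e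
  have hzero t := eq_zero_iff_of_pow_eq_pow (by omega) (by omega) (hpow t)
  by_cases hxt : powerVector G k lam c z (Sum.inr (e, t)) = 0
  · obtain ⟨t', ht'⟩ := Fintype.exists_ne_of_one_lt_card (by simp only [Fintype.card_fin]; omega) t
    refine eigenequation_of_eq_zero (by omega) hxt fun h hh ht => ?_
    obtain ⟨f, -, rfl⟩ := mem_image.mp hh
    obtain rfl : e = f := inr_mem_powerEdge.mp ht
    exact ⟨Sum.inr (e, t'), inr_mem_powerEdge.mpr rfl, by simpa using ht',
      (hzero t').mpr ((hzero t).mp hxt)⟩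
  refine eigenequation_of_mul_pow_eq (by omega) hxt ?_
  have hfilter : univ.filter (Sum.inr (e, t) ∈ powerEdge G k ·) = {e} := by
    ext
    simp [eq_comm]
  rw [sum_filter_powerEdges (by omega), hfilter, sum_singleton,
    prod_powerEdge_powerVector (by omega) hc hz, hpow, hz]

end Construction

/-- **(Zhou et al.)** If `β` is an eigenvalue of the adjacency matrix of some subgraph of `G`
(vertex set `S`, edge set `E' ⊆ E(G)` with edges inside `S`) and `lam^k = β²` with `k ≥ 4`,
then `lam` is an eigenvalue of the k-power hypergraph `G^(k)`. -/
theorem eigenvalue_of_subgraph_eigenvalue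
    {V : Type*} [Fintype V] [DecidableEq V] (G : SimpleGraph V) [DecidableRel G.Adj]
    (k : ℕ) (hk : 4 ≤ k) (β lam : ℂ)
    (hβ : ∃ (S : Finset V) (E' : Finset (Sym2 V)),
      E' ⊆ G.edgeFinset ∧ (∀ e ∈ E', ∀ v ∈ e, v ∈ S) ∧
      ∃ y : ↥S → ℂ, y ≠ 0 ∧
        Matrix.mulVec
          (Matrix.of fun i j : ↥S => if s((i : V), (j : V)) ∈ E' then (1 : ℂ) else 0) y
          = β • y)
    (hlam : lam ^ k = β ^ 2) :
    IsHypergraphEigenvalue k (powerEdges G k) lam := by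
  obtain ⟨S, E', hE', hE'S, y, hy, heig⟩ := hβ
  obtain ⟨Y, hY0, hY⟩ := exists_extend_eigenvector hE'S hy heig
  choose c hc using fun u => IsAlgClosed.exists_pow_nat_eq (Y u ^ 2) (by omega : 0 < k)
  choose z hz using fun e => IsAlgClosed.exists_pow_nat_eq (edgeWeight E' β Y e) (by omega : 0 < k)
  refine ⟨powerVector G k lam c z, ?_, ?_⟩
  · obtain ⟨u, hu⟩ := Function.ne_iff.mp hY0
    exact Function.ne_iff.mpr
      ⟨Sum.inl u, mt (eq_zero_iff_of_pow_eq_pow (by omega) two_ne_zero (hc u)).mp hu⟩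
  · rintro (u | ⟨e, t⟩)
    · exact eigenequation_powerVector_inl (by omega) hlam hc hz hE' hY u
    · exact eigenequation_powerVector_inr hk hlam hc hz e t
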